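/- arXiv:1412.2226 — 2 statements merged into one kernel-verified Lean document; each statement's English description precedes it below -/
import Mathlib

section
/- Suppose item o is ranked at the k'-th position in agent a_1's preference, with k' ≤ k, and let I* denote agent a_1's k'−1 most preferred items. Then there exists a balanced policy under which agent a_1 does not receive item o if and only if there exist a set I' ⊆ I ∖ (I* ∪ {o}) with |I'| = k−k'+1 and an assignment of all items of I ∖ (I' ∪ I*) to the agents other than a_1 in which each such agent receives exactly k items and every such agent strictly prefers each item she receives to every item of I'. -/
open Finset
open scoped Classical

/-- The most preferred item of a nonempty finset w.r.t. a linear order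
(greater means more preferred). -/
noncomputable def favorite {ι : Type} (L : LinearOrder ι) (S : Finset ι) (h : S.Nonempty) : ι :=
  @Finset.max' ι L S h

/-- Sequential allocation: process the turns in order; at each turn the agent whose
turn it is picks her most preferred item among the items not yet allocated.
Returns the list of (agent, item) picks, in order. -/
noncomputable def seqAlloc {n : ℕ} {ι : Type} [DecidableEq ι]
    (P : Fin n → LinearOrder ι) : List (Fin n) → Finset ι → List (Fin n × ι)
  | [], _ => []
  | a :: rest, S =>
    if h : S.Nonempty then
      (a, favorite (P a) S h) :: seqAlloc P rest (S.erase (favorite (P a) S h))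
    else []

/-- `M` is the outcome of the policy `π`: every item is picked by the agent that
`M` assigns it to. -/
def IsOutcome {n : ℕ} {ι : Type} [Fintype ι] [DecidableEq ι]
    (P : Fin n → LinearOrder ι) (π : List (Fin n)) (M : ι → Fin n) : Prop :=
  ∀ o : ι, (M o, o) ∈ seqAlloc P π Finset.univ

/-- The set of items that agent `a` picks under the policy `π`. -/
noncomputable def receives {n : ℕ} {ι : Type} [Fintype ι] [DecidableEq ι]
    (P : Fin n → LinearOrder ι) (π : List (Fin n)) (a : Fin n) : Finset ι :=
  Finset.univ.filter (fun o => (a, o) ∈ seqAlloc P π Finset.univ)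

/-- An allocation `M` is Pareto optimal if there is no bijection `f` of the items such
that every agent weakly prefers `f o` to `o` for each item `o` she gets, with at least
one strict preference. -/
def ParetoOptimal {n : ℕ} {ι : Type} (P : Fin n → LinearOrder ι) (M : ι → Fin n) : Prop :=
  ¬ ∃ f : ι ≃ ι, (∀ o : ι, (P (M o)).le o (f o)) ∧ (∃ o : ι, (P (M o)).lt o (f o))

/-- A policy is balanced if every agent has exactly `k` turns. -/
def BalancedPolicy {n : ℕ} (k : ℕ) (π : List (Fin n)) : Prop :=
  ∀ a : Fin n, π.count a = k

/-- An allocation is balanced if every agent receives exactly `k` items. -/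
def BalancedAlloc {n : ℕ} {ι : Type} [Fintype ι] (k : ℕ) (M : ι → Fin n) : Prop :=
  ∀ a : Fin n, (Finset.univ.filter (fun o => M o = a)).card = k

/-- A policy is recursively balanced if it splits into `k` consecutive rounds of `n`
turns each, every agent having exactly one turn in each round. -/
def RecBalanced (n k : ℕ) (π : List (Fin n)) : Prop :=
  ∃ rounds : List (List (Fin n)), rounds.length = k ∧
    (∀ r ∈ rounds, r.length = n ∧ ∀ a : Fin n, r.count a = 1) ∧
    π = rounds.flatten

/-- A strict alternation policy: every one of the `k` rounds uses the same order `σ`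
over the agents. -/
def StrictAlt (n k : ℕ) (π : List (Fin n)) : Prop :=
  ∃ σ : List (Fin n), σ.length = n ∧ (∀ a : Fin n, σ.count a = 1) ∧
    π = (List.replicate k σ).flatten

/-- A balanced alternation policy: odd-numbered rounds use the order `σ` over the agents
and even-numbered rounds use its reverse. -/
def BalAlt (n k : ℕ) (π : List (Fin n)) : Prop :=
  ∃ σ : List (Fin n), σ.length = n ∧ (∀ a : Fin n, σ.count a = 1) ∧
    π = ((List.range k).map (fun r => if r % 2 = 0 then σ else σ.reverse)).flatten

/-- `p j i` (for `1 ≤ i ≤ k`) is the item ranked `i`-th by agent `j` among the items `M`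
allocates to `j`: it is allocated to `j`, and exactly `i - 1` of the items allocated
to `j` are strictly preferred to it by agent `j`. -/
def IsRankingOf {n : ℕ} {ι : Type} [Fintype ι] (P : Fin n → LinearOrder ι) (k : ℕ)
    (M : ι → Fin n) (p : Fin n → ℕ → ι) : Prop :=
  ∀ (j : Fin n) (i : ℕ), 1 ≤ i → i ≤ k →
    M (p j i) = j ∧
    (Finset.univ.filter (fun o => M o = j ∧ (P j).lt (p j i) o)).card = i - 1

/-- Condition 3: for all `1 ≤ t < s ≤ k` and all agents `j, j'`, agent `j` strictly
prefers `p j t` to `p j' s`. -/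
def Cond3 {n : ℕ} {ι : Type} (P : Fin n → LinearOrder ι) (k : ℕ) (p : Fin n → ℕ → ι) : Prop :=
  ∀ t s : ℕ, 1 ≤ t → t < s → s ≤ k → ∀ j j' : Fin n, (P j).lt (p j' s) (p j t)

/-- The edge relation of the directed graph `G_M`: for odd `i ≤ k` an edge `a → b`
whenever `b` strictly prefers `p a i` to `p b i`, and for even `i ≤ k` an edge `a → b`
whenever `a` strictly prefers `p b i` to `p a i`. -/
def GM {n : ℕ} {ι : Type} (P : Fin n → LinearOrder ι) (k : ℕ) (p : Fin n → ℕ → ι)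
    (a b : Fin n) : Prop :=
  (∃ i : ℕ, 1 ≤ i ∧ i ≤ k ∧ i % 2 = 1 ∧ (P b).lt (p b i) (p a i)) ∨
  (∃ i : ℕ, 1 ≤ i ∧ i ≤ k ∧ i % 2 = 0 ∧ (P a).lt (p a i) (p b i))

/-- The edge relation of the directed graph `H_M`: for each `i ≤ k` an edge `a → b`
whenever `b` strictly prefers `p a i` to `p b i`. -/
def HM {n : ℕ} {ι : Type} (P : Fin n → LinearOrder ι) (k : ℕ) (p : Fin n → ℕ → ι)
    (a b : Fin n) : Prop :=
  ∃ i : ℕ, 1 ≤ i ∧ i ≤ k ∧ (P b).lt (p b i) (p a i)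

/-- The `k` most preferred items of agent `j`: those items with fewer than `k` items
strictly preferred to them by `j`. -/
noncomputable def topItems {n : ℕ} {ι : Type} [Fintype ι] (P : Fin n → LinearOrder ι)
    (k : ℕ) (j : Fin n) : Finset ι :=
  Finset.univ.filter (fun o => (Finset.univ.filter (fun o' => (P j).lt o o')).card < k)

/-- The rank of item `o` in agent `j`'s preference (the most preferred item has rank 1). -/
noncomputable def rankOf {n : ℕ} {ι : Type} [Fintype ι] (P : Fin n → LinearOrder ι)
    (j : Fin n) (o : ι) : ℕ :=
  (Finset.univ.filter (fun o' => (P j).lt o o')).card + 1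

/-!
Let `T` be the set of items that `a_1` does not prefer to `o`. If some policy gives `o` to
another agent, then `o` is still picked when `a_1`'s turns are deleted and the policy is run on
`T` alone; conversely, `a_1` may first take her `k' - 1` favourite items `I*` and wait until the
others have had all their turns. So `o` can escape `a_1` exactly when a policy giving every other
agent `k` turns, run on `T`, leaves over a set `I'` avoiding `o` (which `a_1` then receives).
Recording who picks what turns such a run into the assignment `g`. Conversely, `g` is realised by
top trading cycles: every agent still owed items points to the owner of her favourite remaining
item, and the agents on a cycle of this map pick one after another.
-/

theorem Finset.exists_subset_bijOn_of_mapsTo {α : Type*} [Finite α] (φ : α → α)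
    {A : Finset α} (hA : A.Nonempty) (hmaps : Set.MapsTo φ A A) :
    ∃ C ⊆ A, C.Nonempty ∧ Set.BijOn φ C C := by
  classical
  obtain ⟨a, ha⟩ := hA
  obtain ⟨i, j, hij, heq⟩ : ∃ i j, i < j ∧ φ^[j] a = φ^[i] a := by
    obtain ⟨i, j, hne, heq⟩ := Finite.exists_ne_map_eq_of_infinite fun m => φ^[m] a
    rcases lt_or_gt_of_ne hne with h | h
    exacts [⟨i, j, h, heq.symm⟩, ⟨j, i, h, heq⟩]
  have hper : φ^[i] a ∈ Function.periodicPts φ := by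
    refine Function.mk_mem_periodicPts (Nat.sub_pos_of_lt hij) ?_
    rw [Function.IsPeriodicPt, Function.IsFixedPt, ← Function.iterate_add_apply,
      Nat.sub_add_cancel hij.le, heq]
  set C := A.filter (· ∈ Function.periodicPts φ)
  have hmapsC : Set.MapsTo φ C C := fun c hc => by
    simp only [C, coe_filter, Set.mem_ofPred_eq] at hc ⊢
    exact ⟨hmaps hc.1, (Function.bijOn_periodicPts φ).mapsTo hc.2⟩
  refine ⟨C, filter_subset _ _, ⟨φ^[i] a, mem_filter.2 ⟨hmaps.iterate i ha, hper⟩⟩, ?_⟩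
  refine (C.finite_toSet.injOn_iff_bijOn_of_mapsTo hmapsC).1 ?_
  exact (Function.bijOn_periodicPts φ).injOn.mono fun c hc => (mem_filter.1 hc).2

theorem Multiset.count_nsmul_erase_val {α : Type*} [Fintype α] [DecidableEq α] (k : ℕ)
    (a₀ a : α) : (k • (univ.erase a₀).val).count a = if a = a₀ then 0 else k := by
  rw [Multiset.count_nsmul]
  split_ifs with h
  · rw [h, Multiset.count_eq_zero_of_notMem fun h' => notMem_erase a₀ _ (mem_def.2 h'), mul_zero]
  · rw [Multiset.count_eq_one_of_mem (univ.erase a₀).nodup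
      (mem_def.1 (mem_erase.2 ⟨h, mem_univ a⟩)), mul_one]

theorem Finset.map_val_eq_nsmul_erase_iff {α β : Type*} [Fintype β] [DecidableEq β]
    (U : Finset α) (g : α → β) (b₀ : β) (k : ℕ) :
    U.val.map g = k • (univ.erase b₀).val ↔
      (∀ x ∈ U, g x ≠ b₀) ∧ ∀ b ≠ b₀, (U.filter fun x => g x = b).card = k := by
  have hcount : ∀ b, (U.val.map g).count b = (U.filter fun x => g x = b).card := fun b => by
    rw [Multiset.count_map, card_def, filter_val]
    simp only [eq_comm]
  simp only [Multiset.ext, hcount, Multiset.count_nsmul_erase_val]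
  constructor
  · intro h
    exact ⟨by simpa using h b₀, fun b hb => by simpa [hb] using h b⟩
  · rintro ⟨h₀, hk⟩ b
    split_ifs with hb
    · exact card_eq_zero.2 (filter_eq_empty_iff.2 fun x hx => hb ▸ h₀ x hx)
    · exact hk b hb

section SequentialAllocation

variable {n : ℕ} {ι : Type} (P : Fin n → LinearOrder ι)

theorem favorite_mem (a : Fin n) {S : Finset ι} (hS : S.Nonempty) : favorite (P a) S hS ∈ S :=
  @Finset.max'_mem ι (P a) S hS

theorem le_favorite (a : Fin n) {S : Finset ι} (hS : S.Nonempty) {y : ι} (hy : y ∈ S) :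
    (P a).le y (favorite (P a) S hS) :=
  @Finset.le_max' ι (P a) S y hy

theorem lt_favorite (a : Fin n) {S : Finset ι} (hS : S.Nonempty) {y : ι} (hy : y ∈ S)
    (hne : y ≠ favorite (P a) S hS) : (P a).lt y (favorite (P a) S hS) :=
  @lt_of_le_of_ne ι (P a).toPartialOrder _ _ (le_favorite P a hS hy) hne

theorem favorite_eq_of_forall_le (a : Fin n) {S : Finset ι} (hS : S.Nonempty) {x : ι}
    (hx : x ∈ S) (hmax : ∀ y ∈ S, (P a).le y x) : favorite (P a) S hS = x :=
  @le_antisymm ι (P a).toPartialOrder _ _ (@Finset.max'_le ι (P a) S hS x hmax)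
    (le_favorite P a hS hx)

variable [DecidableEq ι]

noncomputable def leftover : List (Fin n) → Finset ι → Finset ι
  | [], S => S
  | a :: t, S => if h : S.Nonempty then leftover t (S.erase (favorite (P a) S h)) else S

theorem leftover_cons (a : Fin n) (t : List (Fin n)) {S : Finset ι} (hS : S.Nonempty) :
    leftover P (a :: t) S = leftover P t (S.erase (favorite (P a) S hS)) :=
  dif_pos hS

theorem seqAlloc_cons (a : Fin n) (t : List (Fin n)) {S : Finset ι} (hS : S.Nonempty) :
    seqAlloc P (a :: t) S =
      (a, favorite (P a) S hS) :: seqAlloc P t (S.erase (favorite (P a) S hS)) :=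
  dif_pos hS

theorem leftover_empty (π : List (Fin n)) : leftover P π (∅ : Finset ι) = ∅ := by
  cases π <;> simp [leftover]

theorem seqAlloc_empty (π : List (Fin n)) : seqAlloc P π (∅ : Finset ι) = [] := by
  cases π <;> simp [seqAlloc]

theorem leftover_subset : ∀ (π : List (Fin n)) (S : Finset ι), leftover P π S ⊆ S
  | [], _ => Subset.rfl
  | a :: t, S => by
    rcases S.eq_empty_or_nonempty with rfl | hS
    · rw [leftover_empty]
    · rw [leftover_cons P a t hS]
      exact (leftover_subset t _).trans (erase_subset _ _)

theorem card_leftover : ∀ (π : List (Fin n)) (S : Finset ι), π.length ≤ S.card →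
    (leftover P π S).card = S.card - π.length
  | [], _, _ => rfl
  | a :: t, S, hlen => by
    have hS : S.Nonempty := card_pos.1 (by simp at hlen; omega)
    rw [leftover_cons P a t hS, card_leftover t _ ?_, card_erase_of_mem (favorite_mem P a hS)]
    · simp; omega
    · rw [card_erase_of_mem (favorite_mem P a hS)]; simp at hlen; omega

theorem leftover_append : ∀ (π₁ π₂ : List (Fin n)) (S : Finset ι),
    leftover P (π₁ ++ π₂) S = leftover P π₂ (leftover P π₁ S)
  | [], _, _ => rfl
  | a :: t, π₂, S => by
    rcases S.eq_empty_or_nonempty with rfl | hS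
    · simp only [leftover_empty]
    · rw [List.cons_append, leftover_cons P a _ hS, leftover_cons P a _ hS, leftover_append]

theorem seqAlloc_append : ∀ (π₁ π₂ : List (Fin n)) (S : Finset ι),
    seqAlloc P (π₁ ++ π₂) S = seqAlloc P π₁ S ++ seqAlloc P π₂ (leftover P π₁ S)
  | [], _, _ => rfl
  | a :: t, π₂, S => by
    rcases S.eq_empty_or_nonempty with rfl | hS
    · simp only [seqAlloc_empty, leftover_empty, List.append_nil]
    · rw [List.cons_append, seqAlloc_cons P a _ hS, seqAlloc_cons P a _ hS, leftover_cons P a _ hS,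
        seqAlloc_append, List.cons_append]

theorem mem_seqAlloc : ∀ {π : List (Fin n)} {S : Finset ι} {b : Fin n} {x : ι},
    (b, x) ∈ seqAlloc P π S → b ∈ π ∧ x ∈ S \ leftover P π S
  | [], _, _, _, h => by simp [seqAlloc] at h
  | a :: t, S, b, x, h => by
    rcases S.eq_empty_or_nonempty with rfl | hS
    · simp [seqAlloc_empty] at h
    rw [seqAlloc_cons P a t hS, List.mem_cons] at h
    rw [leftover_cons P a t hS]
    rcases h with h | h
    · obtain ⟨rfl, rfl⟩ := Prod.mk.inj h
      exact ⟨List.mem_cons_self, mem_sdiff.2 ⟨favorite_mem P b hS,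
        fun hx => notMem_erase _ _ (leftover_subset P t _ hx)⟩⟩
    · obtain ⟨hb, hx⟩ := mem_seqAlloc h
      exact ⟨List.mem_cons_of_mem _ hb, mem_sdiff.2 ⟨mem_of_mem_erase (mem_sdiff.1 hx).1,
        (mem_sdiff.1 hx).2⟩⟩

theorem leftover_replicate (a : Fin n) {S B : Finset ι} (hBS : B ⊆ S)
    (hlt : ∀ x ∈ S \ B, ∀ y ∈ B, (P a).lt y x) :
    leftover P (List.replicate (S \ B).card a) S = B := by
  induction hj : (S \ B).card generalizing S with
  | zero =>
    rw [card_eq_zero, sdiff_eq_empty_iff_subset] at hj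
    exact hj.antisymm hBS
  | succ j ih =>
    have hD : (S \ B).Nonempty := card_pos.1 (by omega)
    have hS : S.Nonempty := hD.mono sdiff_subset
    have hfav : favorite (P a) S hS ∈ S \ B := by
      obtain ⟨x, hx⟩ := hD
      refine mem_sdiff.2 ⟨favorite_mem P a hS, fun hB => ?_⟩
      exact @not_lt_of_ge ι (P a).toPreorder _ _ (le_favorite P a hS (mem_sdiff.1 hx).1)
        (hlt x hx _ hB)
    have hsdiff : S.erase (favorite (P a) S hS) \ B = (S \ B).erase (favorite (P a) S hS) :=
      erase_sdiff_comm _ _ _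
    rw [List.replicate_succ, leftover_cons P a _ hS]
    refine ih (fun y hy => mem_erase.2 ⟨fun h => (mem_sdiff.1 hfav).2 (h ▸ hy), hBS hy⟩)
      (fun x hx => hlt x (by rw [hsdiff] at hx; exact mem_of_mem_erase hx)) ?_
    rw [hsdiff, card_erase_of_mem hfav, hj, Nat.add_sub_cancel]

theorem exists_assignment_of_length_le [Nonempty (Fin n)] :
    ∀ (π : List (Fin n)) (S : Finset ι), π.length ≤ S.card →
      ∃ g : ι → Fin n, (S \ leftover P π S).val.map g = π ∧
        ∀ x ∈ S \ leftover P π S, ∀ y ∈ leftover P π S, (P (g x)).lt y x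
  | [], S, _ => ⟨Classical.arbitrary _, by simp [leftover], by simp [leftover]⟩
  | a :: t, S, hlen => by
    have hS : S.Nonempty := card_pos.1 (by simp at hlen; omega)
    set p := favorite (P a) S hS
    set L := leftover P t (S.erase p)
    obtain ⟨g, hmap, hpref⟩ := exists_assignment_of_length_le t (S.erase p)
      (by rw [card_erase_of_mem (favorite_mem P a hS)]; simp at hlen; omega)
    have hLS : L ⊆ S.erase p := leftover_subset P t _
    have hsplit : S \ L = insert p (S.erase p \ L) := by
      rw [erase_sdiff_comm, insert_erase (mem_sdiff.2 ⟨favorite_mem P a hS,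
        fun h => notMem_erase p S (hLS h)⟩)]
    rw [leftover_cons P a t hS, hsplit]
    refine ⟨Function.update g p a, ?_, ?_⟩
    · rw [insert_val_of_notMem (fun h => notMem_erase p S (mem_sdiff.1 h).1), Multiset.map_cons,
        Function.update_self, ← Multiset.cons_coe, ← hmap]
      refine congrArg _ (Multiset.map_congr rfl fun x hx => Function.update_of_ne ?_ _ _)
      exact ne_of_mem_erase (mem_sdiff.1 (mem_def.2 hx)).1
    · intro x hx y hy
      rcases mem_insert.1 hx with rfl | hx
      · rw [Function.update_self]
        exact lt_favorite P a hS (mem_of_mem_erase (hLS hy)) (ne_of_mem_erase (hLS hy))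
      · rw [Function.update_of_ne (ne_of_mem_erase (mem_sdiff.1 hx).1)]
        exact hpref x hx y hy

theorem leftover_eq_sdiff_of_nodup (pick : Fin n → ι) :
    ∀ (l : List (Fin n)) (S : Finset ι),
      (∀ b ∈ l, pick b ∈ S ∧ ∀ y ∈ S, (P b).le y (pick b)) → (l.map pick).Nodup →
        leftover P l S = S \ (l.map pick).toFinset
  | [], S, _, _ => by simp [leftover]
  | b :: l, S, hpick, hnd => by
    obtain ⟨hbS, hbmax⟩ := hpick b List.mem_cons_self
    have hS : S.Nonempty := ⟨_, hbS⟩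
    rw [List.map_cons, List.nodup_cons] at hnd
    rw [leftover_cons P b l hS, favorite_eq_of_forall_le P b hS hbS hbmax,
      leftover_eq_sdiff_of_nodup pick l _ ?_ hnd.2, List.map_cons, List.toFinset_cons,
      sdiff_insert, erase_sdiff_comm]
    intro c hc
    obtain ⟨hcS, hcmax⟩ := hpick c (List.mem_cons_of_mem _ hc)
    refine ⟨mem_erase.2 ⟨fun h => hnd.1 (h ▸ List.mem_map_of_mem hc), hcS⟩,
      fun y hy => hcmax y (mem_of_mem_erase hy)⟩

theorem exists_policy_of_assignment (g : ι → Fin n) {I : Finset ι} (S : Finset ι)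
    (hIS : I ⊆ S) (hpref : ∀ x ∈ S \ I, ∀ y ∈ I, (P (g x)).lt y x) :
    ∃ π : List (Fin n), (π : Multiset (Fin n)) = (S \ I).val.map g ∧ leftover P π S = I := by
  induction S using Finset.strongInduction with
  | H S ih =>
  rcases (S \ I).eq_empty_or_nonempty with hD | hD
  · exact ⟨[], by simp [hD], (sdiff_eq_empty_iff_subset.1 hD).antisymm hIS⟩
  have hS : S.Nonempty := hD.mono sdiff_subset
  set fav : Fin n → ι := fun b => favorite (P b) S hS
  have hfavD : ∀ x ∈ S \ I, fav (g x) ∈ S \ I := fun x hx =>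
    mem_sdiff.2 ⟨favorite_mem P _ hS, fun hI => @not_lt_of_ge ι (P (g x)).toPreorder _ _
      (le_favorite P _ hS (mem_sdiff.1 hx).1) (hpref x hx _ hI)⟩
  -- `C` is a union of cycles of `b ↦ owner of b's favourite`, so the agents of `C` together
  -- own exactly the items `E` they pick first.
  obtain ⟨C, hCA, hC, hbij⟩ := Finset.exists_subset_bijOn_of_mapsTo (g ∘ fav) (hD.image g) (by
    intro b hb
    obtain ⟨x, hx, rfl⟩ := mem_image.1 hb
    exact mem_image_of_mem g (hfavD x hx))
  have hCD : ∀ c ∈ C, fav c ∈ S \ I := fun c hc => by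
    obtain ⟨x, hx, rfl⟩ := mem_image.1 (hCA hc)
    exact hfavD x hx
  have hinj : Set.InjOn fav C := hbij.injOn.of_comp
  set E := C.image fav
  have hED : E ⊆ S \ I := fun x hx => by
    obtain ⟨c, hc, rfl⟩ := mem_image.1 hx
    exact hCD c hc
  have hEval : E.val.map g = C.val := by
    rw [image_val_of_injOn hinj, Multiset.map_map, ← image_val_of_injOn hbij.injOn]
    congr 1
    exact coe_injective (by rw [coe_image, hbij.image_eq])
  obtain ⟨π, hπ, hleft⟩ := ih (S \ E) (sdiff_ssubset (hED.trans sdiff_subset) (hC.image _))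
    (fun y hy => mem_sdiff.2 ⟨hIS hy, fun hE => (mem_sdiff.1 (hED hE)).2 hy⟩)
    (fun x hx y hy => hpref x (mem_sdiff.2 ⟨(mem_sdiff.1 (mem_sdiff.1 hx).1).1,
      (mem_sdiff.1 hx).2⟩) y hy)
  refine ⟨C.toList ++ π, ?_, ?_⟩
  · rw [← Multiset.coe_add, coe_toList, hπ, ← hEval, ← Multiset.map_add, sdiff_right_comm,
      sdiff_val, add_tsub_cancel_of_le (val_le_iff.2 hED)]
  · have hnd : (C.toList.map fav).Nodup :=
      (nodup_toList C).map_on fun x hx y hy => hinj (mem_toList.1 hx) (mem_toList.1 hy)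
    have hfavE : (C.toList.map fav).toFinset = E := by ext; simp [E]
    rw [leftover_append, leftover_eq_sdiff_of_nodup P fav _ S (fun c hc =>
      ⟨(mem_sdiff.1 (hCD c (mem_toList.1 hc))).1, fun y hy => le_favorite P c hS hy⟩) hnd,
      hfavE, hleft]

theorem exists_policy_notMem_leftover_iff [Nonempty (Fin n)] {S : Finset ι} {o : ι}
    {M : Multiset (Fin n)} (hM : M.card ≤ S.card) :
    (∃ π : List (Fin n), (π : Multiset (Fin n)) = M ∧ o ∉ leftover P π S) ↔
      ∃ I ⊆ S, o ∉ I ∧ I.card = S.card - M.card ∧ ∃ g : ι → Fin n,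
        (S \ I).val.map g = M ∧ ∀ x ∈ S \ I, ∀ y ∈ I, (P (g x)).lt y x := by
  constructor
  · rintro ⟨π, rfl, ho⟩
    obtain ⟨g, hg, hpref⟩ := exists_assignment_of_length_le P π S hM
    exact ⟨leftover P π S, leftover_subset P π S, ho, card_leftover P π S hM, g, hg, hpref⟩
  · rintro ⟨I, hIS, hoI, -, g, hg, hpref⟩
    obtain ⟨π, hπ, rfl⟩ := exists_policy_of_assignment P g S hIS hpref
    exact ⟨π, hπ.trans hg, hoI⟩

theorem notMem_leftover_filter_ne (a1 : Fin n) (o : ι) :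
    ∀ (π : List (Fin n)) (S T : Finset ι), T ⊆ S → (∀ x ∈ T, ¬ (P a1).lt o x) →
      o ∈ T → o ∉ leftover P π S → (a1, o) ∉ seqAlloc P π S →
        o ∉ leftover P (π.filter (· ≠ a1)) T
  | [], S, T, hTS, _, hoT, ho, _ => fun _ => ho (hTS hoT)
  | a :: t, S, T, hTS, hT, hoT, ho, ha1 => by
    have hS : S.Nonempty := ⟨o, hTS hoT⟩
    rw [leftover_cons P a t hS] at ho
    rw [seqAlloc_cons P a t hS, List.mem_cons, not_or] at ha1
    rcases eq_or_ne a a1 with rfl | ha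
    · have hpT : favorite (P a) S hS ∉ T := fun hp =>
        hT _ hp (lt_favorite P a hS (hTS hoT) fun h => ha1.1 (by rw [h]))
      rw [List.filter_cons_of_neg (by simp)]
      exact notMem_leftover_filter_ne a o t _ T
        (fun x hx => mem_erase.2 ⟨fun h => hpT (h ▸ hx : _ ∈ T), hTS hx⟩) hT hoT ho ha1.2
    have hT' : T.Nonempty := ⟨o, hoT⟩
    rw [List.filter_cons_of_pos (by simpa using ha), leftover_cons P a _ hT']
    by_cases hqo : favorite (P a) T hT' = o
    · rw [hqo]
      exact fun h => notMem_erase o T (leftover_subset P _ _ h)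
    refine notMem_leftover_filter_ne a1 o t _ _ (fun x hx => ?_)
      (fun x hx => hT x (mem_of_mem_erase hx)) (mem_erase.2 ⟨Ne.symm hqo, hoT⟩) ho ha1.2
    obtain ⟨hxq, hxT⟩ := mem_erase.1 hx
    refine mem_erase.2 ⟨fun hxp => hxq ?_, hTS hxT⟩
    refine @le_antisymm ι (P a).toPartialOrder _ _ (le_favorite P a hT' hxT) ?_
    rw [hxp]
    exact le_favorite P a hS (hTS (favorite_mem P a hT'))

end SequentialAllocation

theorem topItems_eq_filter_lt {n : ℕ} {ι : Type} [Fintype ι] (P : Fin n → LinearOrder ι)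
    (a : Fin n) (o : ι) :
    topItems P (univ.filter fun y => (P a).lt o y).card a = univ.filter fun x => (P a).lt o x := by
  ext x
  simp only [topItems, mem_filter, mem_univ, true_and]
  constructor
  · intro hx
    by_contra hox
    refine absurd hx (not_lt.2 (card_le_card fun y hy => ?_))
    simp only [mem_filter, mem_univ, true_and] at hy ⊢
    exact @lt_of_le_of_lt ι (P a).toPreorder _ _ _ (@le_of_not_gt ι (P a) _ _ hox) hy
  · intro hox
    refine card_lt_card ⟨fun y hy => ?_, fun hsub => ?_⟩
    · simp only [mem_filter, mem_univ, true_and] at hy ⊢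
      exact @lt_trans ι (P a).toPreorder _ _ _ hox hy
    · have := hsub (mem_filter.2 ⟨mem_univ x, hox⟩)
      exact @lt_irrefl ι (P a).toPreorder x (mem_filter.1 this).2

theorem BalancedPolicy.coe_eq {n k : ℕ} {π : List (Fin n)} (hπ : BalancedPolicy k π) :
    (π : Multiset (Fin n)) = k • univ.val :=
  Multiset.ext.2 fun a => by
    rw [Multiset.coe_count, hπ a, Multiset.count_nsmul, Multiset.count_univ, mul_one]

theorem leftover_replicate_card_filter_lt {n : ℕ} {ι : Type} [Fintype ι] [DecidableEq ι]
    (P : Fin n → LinearOrder ι) (a : Fin n) (o : ι) :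
    leftover P (List.replicate (univ.filter fun x => (P a).lt o x).card a) univ =
      univ \ univ.filter fun x => (P a).lt o x := by
  set top := univ.filter fun x => (P a).lt o x
  conv_lhs => rw [← Finset.sdiff_sdiff_eq_self (subset_univ top)]
  refine leftover_replicate P a sdiff_subset fun x hx y hy => ?_
  rw [Finset.sdiff_sdiff_eq_self (subset_univ top), mem_filter] at hx
  rw [mem_sdiff, mem_filter] at hy
  exact @lt_of_le_of_lt ι (P a).toPreorder _ _ _
    (@le_of_not_gt ι (P a) _ _ fun h => hy.2 ⟨mem_univ y, h⟩) hx.2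

theorem notMem_leftover_filter_ne_of_notMem_receives {n : ℕ} {ι : Type} [Fintype ι]
    [DecidableEq ι] (P : Fin n → LinearOrder ι) {π : List (Fin n)} {a1 : Fin n} {o : ι}
    (hlen : π.length = Fintype.card ι) (ho : o ∉ receives P π a1) :
    o ∉ leftover P (π.filter (· ≠ a1)) (univ \ univ.filter fun x => (P a1).lt o x) := by
  have hπo : o ∉ leftover P π univ := by
    rw [card_eq_zero.1 ((card_leftover P π univ (by simp [hlen])).trans (by simp [hlen]))]
    exact notMem_empty o
  refine notMem_leftover_filter_ne P a1 o π univ _ (subset_univ _) (fun x hx => ?_) ?_ hπo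
    fun h => ho (mem_filter.2 ⟨mem_univ o, h⟩)
  · simpa using hx
  · simp

theorem exists_balancedPolicy_notMem_receives_iff {n k : ℕ} {ι : Type} [Fintype ι]
    [DecidableEq ι] (hcard : Fintype.card ι = k * n) (P : Fin n → LinearOrder ι) (a1 : Fin n)
    (o : ι) (hk : (univ.filter fun x => (P a1).lt o x).card ≤ k) :
    (∃ π : List (Fin n), BalancedPolicy k π ∧ o ∉ receives P π a1) ↔
      ∃ τ : List (Fin n), (τ : Multiset (Fin n)) = k • (univ.erase a1).val ∧
        o ∉ leftover P τ (univ \ univ.filter fun x => (P a1).lt o x) := by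
  constructor
  · rintro ⟨π, hπ, ho⟩
    have hlen : π.length = Fintype.card ι := by
      rw [hcard, ← Multiset.coe_card, hπ.coe_eq]
      simp [mul_comm]
    refine ⟨π.filter (· ≠ a1), Multiset.ext.2 fun a => ?_,
      notMem_leftover_filter_ne_of_notMem_receives P hlen ho⟩
    rw [Multiset.coe_count, Multiset.count_nsmul_erase_val]
    split_ifs with ha
    · exact List.count_eq_zero.2 fun h => by simpa [ha] using List.of_mem_filter h
    · rw [List.count_filter (by simpa using ha), hπ a]
  · rintro ⟨τ, hτ, ho⟩
    have hcount : ∀ a, τ.count a = if a = a1 then 0 else k := fun a => by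
      rw [← Multiset.coe_count, hτ, Multiset.count_nsmul_erase_val]
    set j := (univ.filter fun x => (P a1).lt o x).card
    refine ⟨List.replicate j a1 ++ τ ++ List.replicate (k - j) a1, fun a => ?_, fun hmem => ?_⟩
    · simp only [List.count_append, List.count_replicate, hcount, beq_iff_eq]
      split_ifs <;> omega
    rw [receives, mem_filter, seqAlloc_append, seqAlloc_append, leftover_append,
      leftover_replicate_card_filter_lt, List.mem_append, List.mem_append] at hmem
    rcases hmem.2 with (h | h) | h
    · have := (mem_sdiff.1 (mem_seqAlloc P h).2).2
      rw [leftover_replicate_card_filter_lt] at this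
      exact this (by simp)
    · exact List.count_eq_zero.1 (by simpa using hcount a1) (mem_seqAlloc P h).1
    · exact ho (mem_sdiff.1 (mem_seqAlloc P h).2).1

theorem necessary_item_balanced_flow_general
    {ι : Type} [Fintype ι] [DecidableEq ι] {n k : ℕ}
    (hcard : Fintype.card ι = k * n)
    (P : Fin n → LinearOrder ι) (a1 : Fin n) (o : ι)
    (k' : ℕ) (hk'k : k' ≤ k) (hrank : rankOf P a1 o = k') :
    (∃ π : List (Fin n), BalancedPolicy k π ∧ o ∉ receives P π a1) ↔
      ∃ I' : Finset ι,
        I' ⊆ Finset.univ \ insert o (topItems P (k' - 1) a1) ∧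
        I'.card = k - k' + 1 ∧
        ∃ g : ι → Fin n,
          (∀ x ∈ Finset.univ \ (I' ∪ topItems P (k' - 1) a1), g x ≠ a1) ∧
          (∀ a : Fin n, a ≠ a1 →
            ((Finset.univ \ (I' ∪ topItems P (k' - 1) a1)).filter
              (fun x => g x = a)).card = k) ∧
          (∀ a : Fin n, a ≠ a1 → ∀ x ∈ Finset.univ \ (I' ∪ topItems P (k' - 1) a1),
            g x = a → ∀ y ∈ I', (P a).lt y x) := by
  have htop : (univ.filter fun x => (P a1).lt o x).card + 1 = k' := hrank
  rw [show k' - 1 = (univ.filter fun x => (P a1).lt o x).card by omega, topItems_eq_filter_lt,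
    exists_balancedPolicy_notMem_receives_iff hcard P a1 o (by omega)]
  set top := univ.filter fun x => (P a1).lt o x
  have : Nonempty (Fin n) := ⟨a1⟩
  have hTcard : (univ \ top).card = k * n - top.card := by rw [card_univ_sdiff, hcard]
  have hMcard : (k • (univ.erase a1).val).card = k * n - k := by simp [Nat.mul_sub_one]
  have hkn : k ≤ k * n := Nat.le_mul_of_pos_right k a1.pos
  rw [exists_policy_notMem_leftover_iff P (by omega)]
  have hsub : ∀ I : Finset ι, I ⊆ univ \ insert o top ↔ I ⊆ univ \ top ∧ o ∉ I := by
    intro I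
    simp only [subset_sdiff, subset_univ, true_and, disjoint_insert_right]; tauto
  have hU : ∀ I : Finset ι, univ \ (I ∪ top) = (univ \ top) \ I := fun I => by
    rw [sdiff_sdiff_left, union_comm]; rfl
  simp only [hsub, hU, hTcard, hMcard, map_val_eq_nsmul_erase_iff]
  constructor
  · rintro ⟨I, hIT, hoI, hI, g, hg, hpref⟩
    exact ⟨I, ⟨hIT, hoI⟩, by omega, g, hg.1, hg.2,
      fun a _ x hx hgx y hy => hgx ▸ hpref x hx y hy⟩
  · rintro ⟨I, ⟨hIT, hoI⟩, hI, g, hg₀, hgk, hpref⟩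
    exact ⟨I, hIT, hoI, by omega, g, ⟨hg₀, hgk⟩,
      fun x hx => hpref _ (hg₀ x hx) x hx rfl⟩

/-- If item `o` is ranked `k'`-th (`k' ≤ k`) by agent `a_1`, whose top
`k' - 1` items form `I*`, then some balanced policy denies `o` to `a_1` iff there are a
set `I' ⊆ I \ (I* ∪ {o})` with `|I'| = k - k' + 1` and an assignment of all items of
`I \ (I' ∪ I*)` to the agents other than `a_1`, giving each of them exactly `k` items,
each of which she strictly prefers to every item of `I'`. -/
theorem necessary_item_balanced_flow
    {ι : Type} [Fintype ι] [DecidableEq ι] {n k : ℕ} (hn : 0 < n) (hk : 1 ≤ k)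
    (hcard : Fintype.card ι = k * n)
    (P : Fin n → LinearOrder ι) (a1 : Fin n) (o : ι)
    (k' : ℕ) (hk'1 : 1 ≤ k') (hk'k : k' ≤ k) (hrank : rankOf P a1 o = k') :
    (∃ π : List (Fin n), BalancedPolicy k π ∧ o ∉ receives P π a1) ↔
      ∃ I' : Finset ι,
        I' ⊆ Finset.univ \ insert o (topItems P (k' - 1) a1) ∧
        I'.card = k - k' + 1 ∧
        ∃ g : ι → Fin n,
          (∀ x ∈ Finset.univ \ (I' ∪ topItems P (k' - 1) a1), g x ≠ a1) ∧
          (∀ a : Fin n, a ≠ a1 →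
            ((Finset.univ \ (I' ∪ topItems P (k' - 1) a1)).filter
              (fun x => g x = a)).card = k) ∧
          (∀ a : Fin n, a ≠ a1 → ∀ x ∈ Finset.univ \ (I' ∪ topItems P (k' - 1) a1),
            g x = a → ∀ y ∈ I', (P a).lt y x) :=
  necessary_item_balanced_flow_general hcard P a1 o k' hk'k hrank
end

section
/- Suppose the allocation M is the outcome of some recursively balanced policy. Then for every recursively balanced policy π whose outcome is M and for every round index t with 1 ≤ t ≤ k, each agent a_j picks exactly the item p_j^t at her turn in round t of π. -/
open Finset
open scoped Classical

/-!
An agent takes her favourite remaining item, so everything picked after her turn was still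
available at it and is worse for her than what she took. Hence, when `M` is the outcome, the
items of agent `b` that she prefers to her pick at turn `s` are exactly those she picked at her
earlier turns: if she had `t` earlier turns, she now picks her `(t + 1)`-th ranked item. In a
recursively balanced policy `t` is the number `s / n` of completed rounds.
-/

section SeqAlloc

lemma favorite_mem_s13 {ι : Type} (L : LinearOrder ι) {S : Finset ι} (h : S.Nonempty) :
    favorite L S h ∈ S :=
  @Finset.max'_mem ι L S h

lemma le_favorite_s13 {ι : Type} (L : LinearOrder ι) {S : Finset ι} (h : S.Nonempty) {o : ι}
    (ho : o ∈ S) : L.le o (favorite L S h) :=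
  @Finset.le_max' ι L S o ho

variable {n : ℕ} {ι : Type} [DecidableEq ι] (P : Fin n → LinearOrder ι)

lemma seqAlloc_cons_of_nonempty (a : Fin n) (π : List (Fin n)) {S : Finset ι}
    (h : S.Nonempty) :
    seqAlloc P (a :: π) S =
      (a, favorite (P a) S h) :: seqAlloc P π (S.erase (favorite (P a) S h)) := by
  rw [seqAlloc, dif_pos h]

lemma snd_mem_of_mem_seqAlloc :
    ∀ {π : List (Fin n)} {S : Finset ι} {x : Fin n × ι}, x ∈ seqAlloc P π S → x.2 ∈ S
  | [], _, _, hx => by simp [seqAlloc] at hx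
  | a :: π, S, x, hx => by
    by_cases h : S.Nonempty
    · rw [seqAlloc_cons_of_nonempty P a π h, List.mem_cons] at hx
      rcases hx with rfl | hx
      · exact favorite_mem_s13 (P a) h
      · exact Finset.mem_of_mem_erase (snd_mem_of_mem_seqAlloc hx)
    · simp [seqAlloc, h] at hx

lemma map_fst_seqAlloc :
    ∀ {π : List (Fin n)} {S : Finset ι}, π.length ≤ #S → (seqAlloc P π S).map Prod.fst = π
  | [], _, _ => by simp [seqAlloc]
  | a :: π, S, hlen => by
    rw [List.length_cons] at hlen
    have h : S.Nonempty := Finset.card_pos.1 (by omega)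
    rw [seqAlloc_cons_of_nonempty P a π h, List.map_cons, map_fst_seqAlloc]
    rw [Finset.card_erase_of_mem (favorite_mem_s13 (P a) h)]
    omega

lemma pairwise_seqAlloc :
    ∀ (π : List (Fin n)) (S : Finset ι),
      (seqAlloc P π S).Pairwise (fun x y => (P x.1).lt y.2 x.2)
  | [], _ => by simp [seqAlloc]
  | a :: π, S => by
    by_cases h : S.Nonempty
    · rw [seqAlloc_cons_of_nonempty P a π h, List.pairwise_cons]
      refine ⟨fun y hy => ?_, pairwise_seqAlloc π _⟩
      obtain ⟨hne, hyS⟩ := Finset.mem_erase.1 (snd_mem_of_mem_seqAlloc P hy)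
      exact @lt_of_le_of_ne ι (P a).toPartialOrder _ _ (le_favorite_s13 (P a) h hyS) hne
    · simp [seqAlloc, h]

end SeqAlloc

section Picks

variable {n : ℕ} {ι : Type} {P : Fin n → LinearOrder ι} {M : ι → Fin n}
  {L : List (Fin n × ι)}

lemma nodup_map_snd_of_pairwise (hL : L.Pairwise (fun x y => (P x.1).lt y.2 x.2)) :
    (L.map Prod.snd).Nodup :=
  List.pairwise_map.2 (hL.imp fun h => @ne_of_gt ι (P _).toPreorder _ _ h)

lemma apply_snd_eq_fst_of_pairwise (hL : L.Pairwise (fun x y => (P x.1).lt y.2 x.2))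
    (hM : ∀ o, (M o, o) ∈ L) {x : Fin n × ι} (hx : x ∈ L) : M x.2 = x.1 :=
  congrArg Prod.fst (List.inj_on_of_nodup_map (nodup_map_snd_of_pairwise hL) (hM x.2) hx rfl)

lemma card_preferred_eq_count [Fintype ι] (hL : L.Pairwise (fun x y => (P x.1).lt y.2 x.2))
    (hM : ∀ o, (M o, o) ∈ L) {l₁ l₂ : List (Fin n × ι)} {x : Fin n × ι}
    (hsplit : L = l₁ ++ x :: l₂) :
    #(univ.filter fun o => M o = x.1 ∧ (P x.1).lt x.2 o) = (l₁.map Prod.fst).count x.1 := by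
  have hL' := hL
  rw [hsplit, List.pairwise_append, List.pairwise_cons] at hL'
  obtain ⟨-, ⟨hx₂, -⟩, hx₁⟩ := hL'
  have hpicked : univ.filter (fun o => M o = x.1 ∧ (P x.1).lt x.2 o) =
      ((l₁.filter fun y => y.1 = x.1).map Prod.snd).toFinset := by
    ext o
    simp only [Finset.mem_filter, Finset.mem_univ, true_and, List.mem_toFinset, List.mem_map,
      List.mem_filter, decide_eq_true_eq]
    constructor
    · rintro ⟨hMo, hlt⟩
      have hmem := hM o
      rw [hsplit, List.mem_append, List.mem_cons] at hmem
      rcases hmem with h₁ | rfl | h₂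
      · exact ⟨_, ⟨h₁, hMo⟩, rfl⟩
      · exact absurd hlt (@lt_irrefl ι (P _).toPreorder _)
      · exact absurd (hx₂ _ h₂) (@not_lt_of_gt ι (P _).toPreorder _ _ (hMo ▸ hlt))
    · rintro ⟨y, ⟨hy, hyx⟩, rfl⟩
      refine ⟨hyx ▸ apply_snd_eq_fst_of_pairwise hL hM (hsplit ▸ List.mem_append_left _ hy), ?_⟩
      exact hyx ▸ hx₁ y hy x List.mem_cons_self
  have hnodup : ((l₁.filter fun y => y.1 = x.1).map Prod.snd).Nodup := by
    refine (nodup_map_snd_of_pairwise hL).sublist (List.Sublist.map _ ?_)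
    exact hsplit ▸ (List.filter_sublist).trans (List.sublist_append_left _ _)
  rw [hpicked, List.toFinset_card_of_nodup hnodup, List.length_map, List.count_eq_countP,
    List.countP_map, List.countP_eq_length_filter]
  rfl

end Picks

lemma Finset.card_filter_lt_lt_card_filter_lt {α : Type*} [LinearOrder α] {T : Finset α}
    {x y : α} (hy : y ∈ T) (hxy : x < y) : #(T.filter (y < ·)) < #(T.filter (x < ·)) :=
  Finset.card_lt_card <| Finset.ssubset_iff_of_subset (Finset.monotone_filter_right _
    fun _ _ => hxy.trans) |>.2 ⟨y, by simp [hy, hxy]⟩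

lemma Finset.injOn_card_filter_lt {α : Type*} [LinearOrder α] (T : Finset α) :
    Set.InjOn (fun x => #(T.filter (x < ·))) T := by
  intro x hx y hy h
  rcases lt_trichotomy x y with hxy | rfl | hyx
  · exact absurd h (Finset.card_filter_lt_lt_card_filter_lt hy hxy).ne'
  · rfl
  · exact absurd h (Finset.card_filter_lt_lt_card_filter_lt hx hyx).ne

lemma IsRankingOf.eq_of_card {n k : ℕ} {ι : Type} [Fintype ι] {P : Fin n → LinearOrder ι}
    {M : ι → Fin n} {p : Fin n → ℕ → ι} (hp : IsRankingOf P k M p) {j : Fin n} {i : ℕ}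
    (hi : 1 ≤ i) (hik : i ≤ k) {o : ι} (ho : M o = j)
    (hcard : #(univ.filter fun o' => M o' = j ∧ (P j).lt o o') = i - 1) : o = p j i := by
  let _ := P j
  obtain ⟨hpM, hpcard⟩ := hp j i hi hik
  refine Finset.injOn_card_filter_lt (univ.filter (M · = j))
    (by simpa using ho) (by simpa using hpM) ?_
  simp only [Finset.filter_filter]
  convert hcard.trans hpcard.symm

lemma List.count_take_getElem_lt {α : Type*} [DecidableEq α] (l : List α) {s : ℕ}
    (hs : s < l.length) : (l.take s).count l[s] < l.count l[s] := by
  have hsplit : l.count l[s] = (l.take s).count l[s] + (l.drop s).count l[s] := by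
    rw [← List.count_append, List.take_append_drop]
  rw [hsplit, List.drop_eq_getElem_cons hs, List.count_cons_self]
  omega

lemma List.count_take_getElem_flatten {α : Type*} [DecidableEq α] {n : ℕ} :
    ∀ {rounds : List (List α)}, (∀ r ∈ rounds, r.length = n ∧ ∀ a, r.count a = 1) →
      ∀ {s : ℕ} (hs : s < rounds.flatten.length),
        (rounds.flatten.take s).count rounds.flatten[s] = s / n
  | [], _, s, hs => by simp at hs
  | r :: rest, hr, s, hs => by
    obtain ⟨rfl, hrc⟩ := hr r List.mem_cons_self
    simp only [List.flatten_cons, List.length_append] at hs ⊢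
    by_cases hsn : s < r.length
    · rw [List.getElem_append_left hsn, List.take_append_of_le_length hsn.le,
        Nat.div_eq_of_lt hsn]
      have := (r.count_take_getElem_lt hsn).trans_eq (hrc _)
      omega
    · have hs' : s - r.length < rest.flatten.length := by omega
      have hn : 0 < r.length := List.length_pos_of_mem
        (List.count_pos_iff.1 ((hrc rest.flatten[s - r.length]).symm ▸ Nat.one_pos))
      rw [List.getElem_append_right (by omega), List.take_append, List.take_of_length_le
        (by omega), List.count_append, hrc, Nat.div_eq_sub_div hn (by omega),
        List.count_take_getElem_flatten (fun r' hr' => hr r' (List.mem_cons_of_mem _ hr')) hs',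
        add_comm]

lemma RecBalanced.length_eq {n k : ℕ} {π : List (Fin n)} (h : RecBalanced n k π) :
    π.length = k * n := by
  obtain ⟨rounds, hlen, hr, rfl⟩ := h
  rw [List.length_flatten, List.sum_eq_card_nsmul _ n (by simpa using fun r hr' => (hr r hr').1),
    List.length_map, hlen, smul_eq_mul]

lemma RecBalanced.count_take_getElem {n k : ℕ} {π : List (Fin n)} (h : RecBalanced n k π)
    {s : ℕ} (hs : s < π.length) : (π.take s).count π[s] = s / n := by
  obtain ⟨rounds, -, hr, rfl⟩ := h
  exact List.count_take_getElem_flatten hr hs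

theorem IsOutcome.getElem?_seqAlloc {n k : ℕ} {ι : Type} [Fintype ι] [DecidableEq ι]
    {P : Fin n → LinearOrder ι} {M : ι → Fin n} {p : Fin n → ℕ → ι} {π : List (Fin n)}
    (hp : IsRankingOf P k M p) (hout : IsOutcome P π M) (hlen : π.length ≤ Fintype.card ι)
    {s : ℕ} (hs : s < π.length) (hk : (π.take s).count π[s] < k) :
    (seqAlloc P π univ)[s]? = some (π[s], p π[s] ((π.take s).count π[s] + 1)) := by
  set L := seqAlloc P π univ
  have hfst : L.map Prod.fst = π := map_fst_seqAlloc P (by simpa using hlen)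
  have hsL : s < L.length := by simpa [← hfst] using hs
  have hpicker : L[s].1 = π[s] := by simp [← hfst]
  have hsplit : L = L.take s ++ L[s] :: L.drop (s + 1) := by
    rw [← List.drop_eq_getElem_cons, List.take_append_drop]
  have hL := pairwise_seqAlloc P π univ
  have hcard := card_preferred_eq_count hL hout hsplit
  rw [List.map_take, hfst, hpicker] at hcard
  rw [List.getElem?_eq_getElem hsL, Option.some_inj, Prod.ext_iff]
  refine ⟨hpicker, hp.eq_of_card (by omega) hk ?_ (by simpa using hcard)⟩
  exact (apply_snd_eq_fst_of_pairwise hL hout (List.getElem_mem hsL)).trans hpicker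

theorem recursively_balanced_round_picks_general
    {ι : Type} [Fintype ι] [DecidableEq ι] {n k : ℕ}
    (hcard : Fintype.card ι = k * n)
    (P : Fin n → LinearOrder ι) (M : ι → Fin n)
    (p : Fin n → ℕ → ι) (hp : IsRankingOf P k M p) :
    ∀ π : List (Fin n), RecBalanced n k π → IsOutcome P π M →
      ∀ (s : ℕ) (hs : s < π.length),
        (seqAlloc P π Finset.univ)[s]? =
          some (π.get ⟨s, hs⟩, p (π.get ⟨s, hs⟩) (s / n + 1)) := by
  intro π hπ hout s hs
  have hlen := hπ.length_eq
  have hround : (π.take s).count π[s] = s / n := hπ.count_take_getElem hs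
  have hk : s / n < k := Nat.div_lt_of_lt_mul (by rw [mul_comm]; omega)
  simpa [hround] using hout.getElem?_seqAlloc hp (by omega) hs (hround ▸ hk)

/-- If `M` is the outcome of some recursively balanced policy, then for
every recursively balanced policy `π` with outcome `M`, at the turn in position `s`
(which lies in round `s / n + 1`) the agent whose turn it is picks exactly her item
`p _ (s / n + 1)` ranked for that round. -/
theorem recursively_balanced_round_picks
    {ι : Type} [Fintype ι] [DecidableEq ι] {n k : ℕ} (hn : 0 < n) (hk : 1 ≤ k)
    (hcard : Fintype.card ι = k * n)
    (P : Fin n → LinearOrder ι) (M : ι → Fin n)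
    (p : Fin n → ℕ → ι) (hp : IsRankingOf P k M p)
    (hM : ∃ π : List (Fin n), RecBalanced n k π ∧ IsOutcome P π M) :
    ∀ π : List (Fin n), RecBalanced n k π → IsOutcome P π M →
      ∀ (s : ℕ) (hs : s < π.length),
        (seqAlloc P π Finset.univ)[s]? =
          some (π.get ⟨s, hs⟩, p (π.get ⟨s, hs⟩) (s / n + 1)) :=
  recursively_balanced_round_picks_general hcard P M p hp
end
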